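/- Let κ be an infinite cardinal and X a T1 topological space. The Wallman κ-bounded extension W_κ̄X is Urysohn if and only if X is strongly κ̄-normal. -/

import Mathlib

/-!
By Alexander's subbasis theorem `wX` is compact, so for closed `A` the ultrafilters containing `A`
form a compact set; when `A ∈ 𝓕_κ(X)` it lies in `W_κ̄X`. In an Urysohn space disjoint compact sets
have open neighbourhoods with disjoint closures, and pulling these back along `j_X` separates
disjoint `A, B ∈ 𝓕_κ(X)`.

Conversely, distinct `𝓤, 𝓥 ∈ W_κ̄X` contain disjoint closed sets, which can be shrunk into
`𝓕_κ(X)` by intersecting with closures of small sets. If `U, V` separate these strongly, so do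
`⟨U⟩, ⟨V⟩`, since every closed ultrafilter in the closure of `⟨U⟩` contains `closure U`.
-/

universe u

open Cardinal Set Topology

/-- `X` is `𝓕`-regular: any `F ∈ 𝓕` and point `x ∉ F` can be separated by disjoint open sets. -/
def FRegular (X : Type u) [TopologicalSpace X] (F : Set (Set X)) : Prop :=
  ∀ A ∈ F, ∀ x : X, x ∉ A → ∃ U V : Set X,
    IsOpen U ∧ IsOpen V ∧ A ⊆ U ∧ x ∈ V ∧ Disjoint U V

/-- `X` is strongly `𝓕`-regular: any `F ∈ 𝓕` and point `x ∉ F` can be separated by open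
sets with disjoint closures. -/
def StronglyFRegular (X : Type u) [TopologicalSpace X] (F : Set (Set X)) : Prop :=
  ∀ A ∈ F, ∀ x : X, x ∉ A → ∃ U V : Set X,
    IsOpen U ∧ IsOpen V ∧ A ⊆ U ∧ x ∈ V ∧ closure U ∩ closure V = ∅

/-- `X` is `𝓕`-normal: any two disjoint members of `𝓕` can be separated by disjoint open sets. -/
def FNormal (X : Type u) [TopologicalSpace X] (F : Set (Set X)) : Prop :=
  ∀ A ∈ F, ∀ B ∈ F, Disjoint A B → ∃ U V : Set X,
    IsOpen U ∧ IsOpen V ∧ A ⊆ U ∧ B ⊆ V ∧ Disjoint U V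

/-- `X` is strongly `𝓕`-normal: any two disjoint members of `𝓕` can be separated by
open sets with disjoint closures. -/
def StronglyFNormal (X : Type u) [TopologicalSpace X] (F : Set (Set X)) : Prop :=
  ∀ A ∈ F, ∀ B ∈ F, Disjoint A B → ∃ U V : Set X,
    IsOpen U ∧ IsOpen V ∧ A ⊆ U ∧ B ⊆ V ∧ closure U ∩ closure V = ∅

/-- `X` is totally `𝓕`-normal: any member of `𝓕` and any closed set disjoint from it can be
separated by disjoint open sets. -/
def TotallyFNormal (X : Type u) [TopologicalSpace X] (F : Set (Set X)) : Prop :=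
  ∀ A ∈ F, ∀ B : Set X, IsClosed B → Disjoint A B → ∃ U V : Set X,
    IsOpen U ∧ IsOpen V ∧ A ⊆ U ∧ B ⊆ V ∧ Disjoint U V

/-- The family `𝓕_κ(X)` of all closed subsets of `X` contained in the closure of some subset
of `X` of cardinality at most `κ`. -/
def FamilyKappa (κ : Cardinal.{u}) (X : Type u) [TopologicalSpace X] : Set (Set X) :=
  {F | IsClosed F ∧ ∃ C : Set X, #C ≤ κ ∧ F ⊆ closure C}

/-- A topological space is Urysohn if any two distinct points have open neighborhoods with
disjoint closures. -/
def UrysohnSpace (X : Type u) [TopologicalSpace X] : Prop :=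
  ∀ x y : X, x ≠ y → ∃ U V : Set X,
    IsOpen U ∧ IsOpen V ∧ x ∈ U ∧ y ∈ V ∧ closure U ∩ closure V = ∅

/-- A closed ultrafilter on a topological space `X`: a family of closed sets not containing `∅`,
closed under binary intersections, and containing every closed set that meets all its members. -/
structure ClosedUltrafilter (X : Type u) [TopologicalSpace X] : Type u where
  sets : Set (Set X)
  isClosed_of_mem : ∀ F ∈ sets, IsClosed F
  empty_not_mem : ∅ ∉ sets
  inter_mem : ∀ A ∈ sets, ∀ B ∈ sets, A ∩ B ∈ sets
  mem_of_forall_inter : ∀ F : Set X, IsClosed F → (∀ A ∈ sets, (F ∩ A).Nonempty) → F ∈ sets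

/-- The topology of the Wallman extension `wX`, generated by the sets
`⟨U⟩ = {𝓕 ∈ wX : ∃ F ∈ 𝓕, F ⊆ U}` for `U` open in `X`. -/
instance ClosedUltrafilter.instTopologicalSpace (X : Type u) [TopologicalSpace X] :
    TopologicalSpace (ClosedUltrafilter X) :=
  TopologicalSpace.generateFrom
    {S | ∃ U : Set X, IsOpen U ∧ S = {u : ClosedUltrafilter X | ∃ F ∈ u.sets, F ⊆ U}}

/-- The canonical map `j_X : X → wX` sending a point `x` to the principal closed ultrafilter
of all closed sets containing `x`. -/
def wallmanMap (X : Type u) [TopologicalSpace X] [T1Space X] (x : X) : ClosedUltrafilter X where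
  sets := {F | IsClosed F ∧ x ∈ F}
  isClosed_of_mem := fun _ hF => hF.1
  empty_not_mem := fun h => h.2
  inter_mem := fun A hA B hB => ⟨hA.1.inter hB.1, hA.2, hB.2⟩
  mem_of_forall_inter := fun F hF h => by
    obtain ⟨y, hyF, hyx⟩ := h {x} ⟨isClosed_singleton, rfl⟩
    exact ⟨hF, hyx ▸ hyF⟩

/-- The Wallman `κ`-bounded extension `W_κ̄X ⊆ wX`: the union of the closures (in `wX`) of the
images `j_X(C)` of subsets `C ⊆ X` of cardinality at most `κ`. -/
def WallmanKappa (κ : Cardinal.{u}) (X : Type u) [TopologicalSpace X] [T1Space X] :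
    Set (ClosedUltrafilter X) :=
  ⋃ C ∈ {C : Set X | #C ≤ κ}, closure (wallmanMap X '' C)

variable {Y : Type*} [TopologicalSpace Y] {s s' t t' : Set Y}

def StronglySeparatedNhds (s t : Set Y) : Prop :=
  ∃ U V : Set Y, IsOpen U ∧ IsOpen V ∧ s ⊆ U ∧ t ⊆ V ∧ Disjoint (closure U) (closure V)

theorem urysohnSpace_iff_stronglySeparatedNhds :
    UrysohnSpace Y ↔ ∀ x y : Y, x ≠ y → StronglySeparatedNhds {x} {y} := by
  simp only [UrysohnSpace, StronglySeparatedNhds, singleton_subset_iff,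
    disjoint_iff_inter_eq_empty]

theorem stronglyFNormal_iff_stronglySeparatedNhds {F : Set (Set Y)} :
    StronglyFNormal Y F ↔ ∀ A ∈ F, ∀ B ∈ F, Disjoint A B → StronglySeparatedNhds A B := by
  simp only [StronglyFNormal, StronglySeparatedNhds, disjoint_iff_inter_eq_empty]

theorem stronglySeparatedNhds_empty_left (t : Set Y) : StronglySeparatedNhds ∅ t :=
  ⟨∅, univ, isOpen_empty, isOpen_univ, subset_rfl, subset_univ t, by simp⟩

namespace StronglySeparatedNhds

theorem symm (h : StronglySeparatedNhds s t) : StronglySeparatedNhds t s :=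
  let ⟨U, V, hU, hV, hsU, htV, hUV⟩ := h
  ⟨V, U, hV, hU, htV, hsU, hUV.symm⟩

theorem mono (h : StronglySeparatedNhds s t) (hs : s' ⊆ s) (ht : t' ⊆ t) :
    StronglySeparatedNhds s' t' :=
  let ⟨U, V, hU, hV, hsU, htV, hUV⟩ := h
  ⟨U, V, hU, hV, hs.trans hsU, ht.trans htV, hUV⟩

theorem union_left (h : StronglySeparatedNhds s t) (h' : StronglySeparatedNhds s' t) :
    StronglySeparatedNhds (s ∪ s') t := by
  obtain ⟨U, V, hU, hV, hsU, htV, hUV⟩ := h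
  obtain ⟨U', V', hU', hV', hsU', htV', hUV'⟩ := h'
  refine ⟨U ∪ U', V ∩ V', hU.union hU', hV.inter hV', union_subset_union hsU hsU',
    subset_inter htV htV', ?_⟩
  rw [closure_union, disjoint_union_left]
  exact ⟨hUV.mono_right (closure_mono inter_subset_left),
    hUV'.mono_right (closure_mono inter_subset_right)⟩

theorem preimage {Z : Type*} [TopologicalSpace Z] {f : Z → Y} (hf : Continuous f)
    (h : StronglySeparatedNhds s t) : StronglySeparatedNhds (f ⁻¹' s) (f ⁻¹' t) :=
  let ⟨U, V, hU, hV, hsU, htV, hUV⟩ := h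
  ⟨f ⁻¹' U, f ⁻¹' V, hU.preimage hf, hV.preimage hf, preimage_mono hsU, preimage_mono htV,
    (hUV.preimage f).mono (hf.closure_preimage_subset U) (hf.closure_preimage_subset V)⟩

theorem of_isCompact_left (hs : IsCompact s) (h : ∀ x ∈ s, StronglySeparatedNhds {x} t) :
    StronglySeparatedNhds s t := by
  refine hs.induction_on (stronglySeparatedNhds_empty_left t) (fun _ _ hsub h ↦ h.mono hsub le_rfl)
    (fun _ _ ↦ union_left) fun x hx ↦ ?_
  obtain ⟨U, V, hU, hV, hxU, htV, hUV⟩ := h x hx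
  exact ⟨U, mem_nhdsWithin_of_mem_nhds (hU.mem_nhds (hxU rfl)), U, V, hU, hV, subset_rfl, htV, hUV⟩

end StronglySeparatedNhds

theorem UrysohnSpace.stronglySeparatedNhds_of_isCompact (hY : UrysohnSpace Y) (hs : IsCompact s)
    (ht : IsCompact t) (hst : Disjoint s t) : StronglySeparatedNhds s t :=
  .of_isCompact_left hs fun x hx ↦ StronglySeparatedNhds.symm <| .of_isCompact_left ht
    fun y hy ↦ urysohnSpace_iff_stronglySeparatedNhds.1 hY y x (hst.ne_of_mem hx hy).symm

namespace ClosedUltrafilter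

variable {X : Type u} [TopologicalSpace X] {u v : ClosedUltrafilter X} {A B F U V : Set X}

theorem sets_injective : Function.Injective (sets : ClosedUltrafilter X → Set (Set X)) := by
  rintro ⟨⟩ ⟨⟩ rfl
  rfl

theorem nonempty_of_mem (hA : A ∈ u.sets) : A.Nonempty :=
  nonempty_iff_ne_empty.2 fun h ↦ u.empty_not_mem (h ▸ hA)

theorem mem_of_superset (hA : A ∈ u.sets) (hB : IsClosed B) (hAB : A ⊆ B) : B ∈ u.sets :=
  u.mem_of_forall_inter B hB fun C hC ↦
    (nonempty_of_mem (u.inter_mem A hA C hC)).mono (inter_subset_inter_left C hAB)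

theorem finiteInter (u : ClosedUltrafilter X) : FiniteInter u.sets where
  univ_mem := u.mem_of_forall_inter univ isClosed_univ fun _ hA ↦ by
    simpa using nonempty_of_mem hA
  inter_mem A hA B hB := u.inter_mem A hA B hB

theorem eq_of_sets_subset (h : u.sets ⊆ v.sets) : u = v := by
  refine sets_injective (h.antisymm fun F hF ↦ ?_)
  exact u.mem_of_forall_inter F (v.isClosed_of_mem F hF) fun A hA ↦
    nonempty_of_mem (v.inter_mem F hF A (h hA))

theorem exists_mem_notMem_of_ne (h : u ≠ v) : ∃ F ∈ u.sets, F ∉ v.sets :=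
  not_subset.1 (mt eq_of_sets_subset h)

theorem exists_mem_disjoint_of_notMem (hF : IsClosed F) (h : F ∉ u.sets) :
    ∃ A ∈ u.sets, Disjoint A F := by
  by_contra! hA
  exact h (u.mem_of_forall_inter F hF fun A hA' ↦ by
    simpa [inter_comm, not_disjoint_iff_nonempty_inter] using hA A hA')

theorem disjoint_setOf_mem (h : Disjoint A B) :
    Disjoint {u : ClosedUltrafilter X | A ∈ u.sets} {u | B ∈ u.sets} :=
  disjoint_left.2 fun u hA hB ↦
    u.empty_not_mem (h.inter_eq ▸ u.inter_mem A hA B hB)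

theorem exists_sets_superset {S : Set (Set X)} (hclosed : ∀ F ∈ S, IsClosed F) (hempty : ∅ ∉ S)
    (hS : FiniteInter S) : ∃ u : ClosedUltrafilter X, S ⊆ u.sets := by
  let P : Set (Set (Set X)) := {T | (∀ F ∈ T, IsClosed F) ∧ ∅ ∉ T ∧ FiniteInter T}
  have hchain : ∀ c ⊆ P, IsChain (· ⊆ ·) c → c.Nonempty → ∃ ub ∈ P, ∀ T ∈ c, T ⊆ ub := by
    intro c hcP hc ⟨T₀, hT₀⟩
    refine ⟨⋃₀ c, ⟨fun F ⟨T, hT, hF⟩ ↦ (hcP hT).1 F hF, fun ⟨T, hT, h⟩ ↦ (hcP hT).2.1 h,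
      ⟨⟨T₀, hT₀, (hcP hT₀).2.2.univ_mem⟩, ?_⟩⟩, fun T hT ↦ subset_sUnion_of_mem hT⟩
    rintro A ⟨T₁, hT₁, hA⟩ B ⟨T₂, hT₂, hB⟩
    rcases hc.total hT₁ hT₂ with h | h
    · exact ⟨T₂, hT₂, (hcP hT₂).2.2.inter_mem (h hA) hB⟩
    · exact ⟨T₁, hT₁, (hcP hT₁).2.2.inter_mem hA (h hB)⟩
  obtain ⟨m, hSm, hmax⟩ := zorn_subset_nonempty P hchain S ⟨hclosed, hempty, hS⟩
  obtain ⟨hmclosed, hmempty, hm⟩ := hmax.1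
  refine ⟨⟨m, hmclosed, hmempty, fun A hA B hB ↦ hm.inter_mem hA hB, fun F hF hFm ↦ ?_⟩, hSm⟩
  -- `F` together with `m` generates a closed filter base, which maximality forces to be `m`.
  let m' : Set (Set X) := {G | IsClosed G ∧ ∃ A ∈ m, F ∩ A ⊆ G}
  have hm'P : m' ∈ P := by
    refine ⟨fun G hG ↦ hG.1, fun ⟨_, A, hA, hFA⟩ ↦ (hFm A hA).ne_empty (subset_empty_iff.1 hFA),
      ⟨isClosed_univ, univ, hm.univ_mem, subset_univ _⟩, ?_⟩
    rintro G₁ ⟨hG₁, A₁, hA₁, hFA₁⟩ G₂ ⟨hG₂, A₂, hA₂, hFA₂⟩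
    exact ⟨hG₁.inter hG₂, A₁ ∩ A₂, hm.inter_mem hA₁ hA₂,
      fun x hx ↦ ⟨hFA₁ ⟨hx.1, hx.2.1⟩, hFA₂ ⟨hx.1, hx.2.2⟩⟩⟩
  exact hmax.2 hm'P (fun A hA ↦ ⟨hmclosed A hA, A, hA, inter_subset_right⟩)
    ⟨hF, univ, hm.univ_mem, inter_subset_left⟩

theorem exists_sets_superset_of_finite_inter {𝒢 : Set (Set X)} (hclosed : ∀ F ∈ 𝒢, IsClosed F)
    (hfin : ∀ t : Finset (Set X), ↑t ⊆ 𝒢 → (⋂₀ (t : Set (Set X))).Nonempty) :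
    ∃ u : ClosedUltrafilter X, 𝒢 ⊆ u.sets := by
  classical
  let S : Set (Set X) := {F | IsClosed F ∧ ∃ t : Finset (Set X), ↑t ⊆ 𝒢 ∧ ⋂₀ ↑t ⊆ F}
  have hS : FiniteInter S := by
    refine ⟨⟨isClosed_univ, ∅, by simp, subset_univ _⟩, ?_⟩
    rintro F₁ ⟨hF₁, t₁, ht₁, hsub₁⟩ F₂ ⟨hF₂, t₂, ht₂, hsub₂⟩
    refine ⟨hF₁.inter hF₂, t₁ ∪ t₂, by simpa using union_subset ht₁ ht₂, ?_⟩
    rw [Finset.coe_union, sInter_union]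
    exact inter_subset_inter hsub₁ hsub₂
  obtain ⟨u, hu⟩ := exists_sets_superset (S := S) (fun F hF ↦ hF.1)
    (fun ⟨_, t, ht, hsub⟩ ↦ (hfin t ht).ne_empty (subset_empty_iff.1 hsub)) hS
  exact ⟨u, fun F hF ↦ hu ⟨hclosed F hF, {F}, by simpa using hF, by simp⟩⟩

/-- The basic open set `⟨U⟩` of the Wallman extension. -/
def basic (U : Set X) : Set (ClosedUltrafilter X) :=
  {u | ∃ F ∈ u.sets, F ⊆ U}

theorem isOpen_basic (hU : IsOpen U) : IsOpen (basic U) :=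
  TopologicalSpace.GenerateOpen.basic _ ⟨U, hU, rfl⟩

theorem basic_mono (h : U ⊆ V) : basic U ⊆ basic (V : Set X) :=
  fun _ ⟨F, hF, hFU⟩ ↦ ⟨F, hF, hFU.trans h⟩

theorem basic_inter (U V : Set X) : basic (U ∩ V) = basic U ∩ basic V := by
  refine (subset_inter (basic_mono inter_subset_left) (basic_mono inter_subset_right)).antisymm ?_
  rintro u ⟨⟨F, hF, hFU⟩, G, hG, hGV⟩
  exact ⟨F ∩ G, u.inter_mem F hF G hG, inter_subset_inter hFU hGV⟩

theorem mem_basic_compl_iff (hF : IsClosed F) : u ∈ basic Fᶜ ↔ F ∉ u.sets := by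
  refine ⟨fun ⟨G, hG, hGF⟩ hFu ↦ ?_, fun h ↦ ?_⟩
  · exact (nonempty_of_mem (u.inter_mem G hG F hFu)).ne_empty
      (disjoint_iff_inter_eq_empty.1 (subset_compl_iff_disjoint_right.1 hGF))
  · obtain ⟨A, hA, hAF⟩ := exists_mem_disjoint_of_notMem hF h
    exact ⟨A, hA, hAF.subset_compl_right⟩

theorem isTopologicalBasis_basic :
    TopologicalSpace.IsTopologicalBasis {S | ∃ U : Set X, IsOpen U ∧ S = basic U} where
  exists_subset_inter := by
    rintro _ ⟨U, hU, rfl⟩ _ ⟨V, hV, rfl⟩ u hu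
    exact ⟨basic (U ∩ V), ⟨U ∩ V, hU.inter hV, rfl⟩, basic_inter U V ▸ hu,
      (basic_inter U V).subset⟩
  sUnion_eq := eq_univ_of_forall fun u ↦
    ⟨basic univ, ⟨univ, isOpen_univ, rfl⟩, univ, u.finiteInter.univ_mem, subset_rfl⟩
  eq_generateFrom := rfl

theorem isClosed_setOf_mem (hF : IsClosed F) : IsClosed {u : ClosedUltrafilter X | F ∈ u.sets} := by
  rw [← isOpen_compl_iff]
  convert isOpen_basic hF.isOpen_compl using 1
  ext u
  exact (mem_basic_compl_iff hF).symm

theorem closure_basic_subset (U : Set X) :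
    closure (basic U) ⊆ {u : ClosedUltrafilter X | closure U ∈ u.sets} :=
  closure_minimal
    (fun _ ⟨_, hF, hFU⟩ ↦ mem_of_superset hF isClosed_closure (hFU.trans subset_closure))
    (isClosed_setOf_mem isClosed_closure)

theorem _root_.StronglySeparatedNhds.basic {S T : Set X} (h : StronglySeparatedNhds S T) :
    StronglySeparatedNhds (ClosedUltrafilter.basic S) (ClosedUltrafilter.basic T) :=
  let ⟨U, V, hU, hV, hSU, hTV, hUV⟩ := h
  ⟨ClosedUltrafilter.basic U, ClosedUltrafilter.basic V, isOpen_basic hU, isOpen_basic hV,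
    basic_mono hSU, basic_mono hTV,
    (disjoint_setOf_mem hUV).mono (closure_basic_subset U) (closure_basic_subset V)⟩

instance : CompactSpace (ClosedUltrafilter X) := by
  refine compactSpace_generateFrom rfl fun P hP hcover ↦ ?_
  by_contra! hfin
  -- Without a finite subcover, the complements of the `U` with `⟨U⟩ ∈ P` have the finite
  -- intersection property, and a closed ultrafilter containing them lies in no `⟨U⟩ ∈ P`.
  let 𝒢 : Set (Set X) := {F | IsClosed F ∧ basic Fᶜ ∈ P}
  have h𝒢 : ∀ t : Finset (Set X), ↑t ⊆ 𝒢 → (⋂₀ (t : Set (Set X))).Nonempty := by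
    intro t ht
    obtain ⟨u, hu⟩ : ∃ u, u ∉ ⋃₀ ((fun F ↦ basic Fᶜ) '' (t : Set (Set X))) := by
      simpa [eq_univ_iff_forall] using
        hfin _ (by rintro _ ⟨F, hF, rfl⟩; exact (ht hF).2) (t.finite_toSet.image _)
    exact nonempty_of_mem <| u.finiteInter.finiteInter_mem t fun F hF ↦
      of_not_not fun hFu ↦ hu ⟨_, ⟨F, hF, rfl⟩, (mem_basic_compl_iff (ht hF).1).2 hFu⟩
  obtain ⟨w, hw⟩ := exists_sets_superset_of_finite_inter (fun F hF ↦ hF.1) h𝒢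
  obtain ⟨_, hOP, hwO⟩ := mem_sUnion.1 (hcover ▸ mem_univ w)
  obtain ⟨U, hU, rfl⟩ := hP hOP
  have hUc : Uᶜ ∈ w.sets := hw ⟨hU.isClosed_compl, by rwa [compl_compl]⟩
  exact (mem_basic_compl_iff hU.isClosed_compl).1 (by rwa [compl_compl]) hUc

theorem isCompact_setOf_mem (hF : IsClosed F) : IsCompact {u : ClosedUltrafilter X | F ∈ u.sets} :=
  (isClosed_setOf_mem hF).isCompact

variable [T1Space X] {κ : Cardinal.{u}} {x : X} {C : Set X}

theorem wallmanMap_mem_basic : wallmanMap X x ∈ basic U ↔ x ∈ U :=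
  ⟨fun ⟨_, ⟨_, hxF⟩, hFU⟩ ↦ hFU hxF,
    fun hx ↦ ⟨{x}, ⟨isClosed_singleton, rfl⟩, singleton_subset_iff.2 hx⟩⟩

theorem continuous_wallmanMap : Continuous (wallmanMap X) := by
  refine continuous_generateFrom_iff.2 ?_
  rintro _ ⟨U, hU, rfl⟩
  have : wallmanMap X ⁻¹' basic U = U := ext fun _ ↦ wallmanMap_mem_basic
  rwa [← this] at hU

theorem mem_closure_image_wallmanMap_iff :
    u ∈ closure (wallmanMap X '' C) ↔ closure C ∈ u.sets := by
  refine ⟨fun hu ↦ closure_basic_subset C (closure_mono ?_ hu), fun hC ↦ ?_⟩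
  · rintro _ ⟨x, hx, rfl⟩
    exact wallmanMap_mem_basic.2 hx
  rw [isTopologicalBasis_basic.mem_closure_iff]
  rintro _ ⟨U, hU, rfl⟩ ⟨F, hF, hFU⟩
  obtain ⟨x, hxU, hxC⟩ : (U ∩ C).Nonempty := closure_nonempty_iff.1 <|
    ((nonempty_of_mem (u.inter_mem F hF _ hC)).mono (inter_subset_inter_left _ hFU)).mono
      hU.inter_closure
  exact ⟨wallmanMap X x, wallmanMap_mem_basic.2 hxU, x, hxC, rfl⟩

theorem mem_wallmanKappa_iff :
    u ∈ WallmanKappa κ X ↔ ∃ C : Set X, #C ≤ κ ∧ closure C ∈ u.sets := by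
  simp only [WallmanKappa, mem_iUnion, exists_prop, mem_ofPred_eq, mem_closure_image_wallmanMap_iff]

theorem wallmanMap_mem_wallmanKappa (hκ : 1 ≤ κ) (x : X) : wallmanMap X x ∈ WallmanKappa κ X :=
  mem_iUnion₂.2 ⟨{x}, (mk_singleton x).trans_le hκ, subset_closure (mem_image_of_mem _ rfl)⟩

theorem setOf_mem_subset_wallmanKappa (hA : A ∈ FamilyKappa κ X) :
    {u : ClosedUltrafilter X | A ∈ u.sets} ⊆ WallmanKappa κ X :=
  let ⟨_, C, hC, hAC⟩ := hA
  fun _ hu ↦ mem_wallmanKappa_iff.2 ⟨C, hC, mem_of_superset hu isClosed_closure hAC⟩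

theorem isCompact_preimage_val_setOf_mem (hA : A ∈ FamilyKappa κ X) :
    IsCompact (Subtype.val ⁻¹' {u : ClosedUltrafilter X | A ∈ u.sets} : Set (WallmanKappa κ X)) :=
  (Topology.IsInducing.subtypeVal.isCompact_preimage_iff
    (Subtype.range_coe.symm ▸ setOf_mem_subset_wallmanKappa hA)).2 (isCompact_setOf_mem hA.1)

end ClosedUltrafilter

open ClosedUltrafilter

theorem inter_closure_mem_familyKappa {X : Type u} [TopologicalSpace X] {κ : Cardinal.{u}}
    {F C : Set X} (hF : IsClosed F) (hC : #C ≤ κ) : F ∩ closure C ∈ FamilyKappa κ X :=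
  ⟨hF.inter isClosed_closure, C, hC, inter_subset_right⟩

section

variable {X : Type u} [TopologicalSpace X] [T1Space X] {κ : Cardinal.{u}}

theorem StronglyFNormal.urysohnSpace_wallmanKappa (hN : StronglyFNormal X (FamilyKappa κ X)) :
    UrysohnSpace (WallmanKappa κ X) := by
  refine urysohnSpace_iff_stronglySeparatedNhds.2 fun x y hxy ↦ ?_
  obtain ⟨F, hFx, hFy⟩ := exists_mem_notMem_of_ne (Subtype.coe_injective.ne hxy)
  obtain ⟨B, hBy, hBF⟩ := exists_mem_disjoint_of_notMem (x.1.isClosed_of_mem F hFx) hFy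
  obtain ⟨C, hC, hCx⟩ := mem_wallmanKappa_iff.1 x.2
  obtain ⟨D, hD, hDy⟩ := mem_wallmanKappa_iff.1 y.2
  have hsep : StronglySeparatedNhds (F ∩ closure C) (B ∩ closure D) :=
    stronglyFNormal_iff_stronglySeparatedNhds.1 hN _
      (inter_closure_mem_familyKappa (x.1.isClosed_of_mem F hFx) hC) _
      (inter_closure_mem_familyKappa (y.1.isClosed_of_mem B hBy) hD)
      (hBF.symm.mono inter_subset_left inter_subset_left)
  refine (hsep.basic.preimage continuous_subtype_val).mono ?_ ?_ <;> rw [singleton_subset_iff]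
  exacts [⟨_, x.1.inter_mem F hFx _ hCx, subset_rfl⟩, ⟨_, y.1.inter_mem B hBy _ hDy, subset_rfl⟩]

theorem UrysohnSpace.stronglyFNormal_familyKappa (hκ : 1 ≤ κ)
    (hW : UrysohnSpace (WallmanKappa κ X)) : StronglyFNormal X (FamilyKappa κ X) := by
  refine stronglyFNormal_iff_stronglySeparatedNhds.2 fun A hA B hB hAB ↦ ?_
  let j : X → WallmanKappa κ X := fun x ↦ ⟨wallmanMap X x, wallmanMap_mem_wallmanKappa hκ x⟩
  have hsep := hW.stronglySeparatedNhds_of_isCompact (isCompact_preimage_val_setOf_mem hA)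
    (isCompact_preimage_val_setOf_mem hB) ((disjoint_setOf_mem hAB).preimage Subtype.val)
  exact (hsep.preimage (continuous_wallmanMap.subtype_mk _) (f := j)).mono
    (fun x hx ↦ ⟨hA.1, hx⟩) (fun x hx ↦ ⟨hB.1, hx⟩)

end

/-- For an infinite cardinal `κ` and a `T₁`-space `X`, the Wallman `κ`-bounded extension
`W_κ̄X` is Urysohn if and only if `X` is strongly `κ̄`-normal. -/
theorem urysohn_wallmanKappa_iff_stronglyFNormal {X : Type u} [TopologicalSpace X] [T1Space X]
    (κ : Cardinal.{u}) (hκ : ℵ₀ ≤ κ) :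
    UrysohnSpace (WallmanKappa κ X) ↔ StronglyFNormal X (FamilyKappa κ X) :=
  ⟨UrysohnSpace.stronglyFNormal_familyKappa (one_le_aleph0.trans hκ),
    StronglyFNormal.urysohnSpace_wallmanKappa⟩
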